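/- The equality negation task for two processes in the layered message-passing model is unsolvable: there is no N and no color-preserving simplicial decision map δ from the N-layer protocol graph P (subdivision of I) to the output graph O such that δ ∘ Ξ is carried by Δ. -/
import Mathlib


inductive Proc : Type where
  | B | W
deriving DecidableEq

/-- Vertices of the `m`-fold subdivision of the equality-negation input graph:
the original vertices `(p,i)` together with interior vertices of each subdivided
input edge `e = {(B,i),(W,j)}` at positions `0 < k < m`. -/
inductive SubV (m : ℕ) : Type where
  | orig : Proc → Fin 3 → SubV m
  | inner : Fin 3 × Fin 3 → ℕ → SubV m
deriving DecidableEq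

/-- The `k`-th vertex (0 ≤ k ≤ m) on the subdivision of the input edge
`e = {(B, e.1), (W, e.2)}`: position `0` is the original `B`-endpoint, position `m`
the original `W`-endpoint. -/
def pvtx (m : ℕ) (e : Fin 3 × Fin 3) (k : ℕ) : SubV m :=
  if k = 0 then .orig .B e.1 else if k = m then .orig .W e.2 else .inner e k

/-- Colors alternate along each subdivided edge, starting with `B` at position 0. -/
def scolor {m : ℕ} : SubV m → Proc
  | .orig p _ => p
  | .inner _ k => if Even k then .B else .W

/-- A subdivision vertex inherits the input value of the original endpoint of its color. -/
def sinput {m : ℕ} : SubV m → Fin 3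
  | .orig _ i => i
  | .inner e k => if Even k then e.1 else e.2

/-- The carrier map Δ of the equality negation task, recorded as the set of admissible
pairs of decisions (d_B, d_W) for an input edge e = {(B,e.1),(W,e.2)}: equal inputs must
lead to distinct decisions and distinct inputs to equal decisions. -/
def Delta (e : Fin 3 × Fin 3) : Set (Fin 2 × Fin 2) := {d | e.1 = e.2 ↔ d.1 ≠ d.2}

/-- the equality negation task for two processes is unsolvable in the layered
message-passing model: there is no N and no color-preserving simplicial decision map δ from
the N-layer protocol graph (the 3^N-fold subdivision of the input graph I) to the output
graph O such that δ ∘ Ξ is carried by Δ, i.e. every edge of the subdivision Ξ(e) of an input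
edge e is sent to an output edge in Δ(e). -/
theorem eqneg_task_unsolvable :
    ¬ ∃ (N : ℕ) (δ : SubV (3 ^ N) → Proc × Fin 2),
      (∀ v, (δ v).1 = scolor v) ∧
      (∀ e : Fin 3 × Fin 3, ∀ k < 3 ^ N,
        (if Even k then ((δ (pvtx (3 ^ N) e k)).2, (δ (pvtx (3 ^ N) e (k + 1))).2)
         else ((δ (pvtx (3 ^ N) e (k + 1))).2, (δ (pvtx (3 ^ N) e k)).2)) ∈ Delta e) := by
  rintro ⟨N, δ, hcol, hΔ⟩
  let m := 3 ^ N
  have hm1 : 1 ≤ m := Nat.one_le_pow _ _ (by norm_num)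
  have hmodd : ¬ Even m := by
    rw [Nat.even_pow]
    rintro ⟨h3, -⟩
    exact absurd h3 (by decide)
  -- step relation for distinct-input edges
  have step : ∀ (e : Fin 3 × Fin 3), e.1 ≠ e.2 → ∀ k < m,
      (δ (pvtx m e k)).2 = (δ (pvtx m e (k + 1))).2 := by
    intro e he k hk
    have h := hΔ e k hk
    simp only [Delta, Set.mem_setOf_eq] at h
    by_cases hE : Even k
    · simp only [if_pos hE] at h
      by_contra hne
      exact he (h.mpr hne)
    · simp only [if_neg hE] at h
      by_contra hne
      exact he (h.mpr (Ne.symm hne))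
  have huneq : ∀ e : Fin 3 × Fin 3, e.1 ≠ e.2 →
      (δ (SubV.orig .B e.1)).2 = (δ (SubV.orig .W e.2)).2 := by
    intro e he
    have key : ∀ k ≤ m, (δ (pvtx m e 0)).2 = (δ (pvtx m e k)).2 := by
      intro k hk
      induction k with
      | zero => rfl
      | succ n ih =>
        exact (ih (by omega)).trans (step e he n (by omega))
    have h0 : pvtx m e 0 = SubV.orig .B e.1 := by simp [pvtx]
    have hM : pvtx m e m = SubV.orig .W e.2 := by
      simp [pvtx]; omega
    have := key m le_rfl
    rwa [h0, hM] at this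
  -- chain: d(B,0) = d(W,0)
  have c1 := huneq (0, 1) (by decide)
  have c2 := huneq (2, 1) (by decide)
  have c3 := huneq (2, 0) (by decide)
  have hBW : (δ (SubV.orig .B 0)).2 = (δ (SubV.orig .W 0)).2 := by
    simp only at c1 c2 c3
    rw [c1, ← c2, c3]
  -- equal-input edge (0,0)
  have stepne : ∀ k < m, (δ (pvtx m (0,0) k)).2 ≠ (δ (pvtx m (0,0) (k + 1))).2 := by
    intro k hk
    have h := hΔ (0,0) k hk
    simp only [Delta, Set.mem_setOf_eq] at h
    by_cases hE : Even k
    · simp only [if_pos hE] at h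
      exact h.mp trivial
    · simp only [if_neg hE] at h
      exact (h.mp trivial).symm
  have alt : ∀ k ≤ m, ((δ (pvtx m (0,0) k)).2 : Fin 2).val =
      if Even k then ((δ (pvtx m (0,0) 0)).2 : Fin 2).val
      else 1 - ((δ (pvtx m (0,0) 0)).2 : Fin 2).val := by
    intro k hk
    induction k with
    | zero => simp
    | succ n ih =>
      have hne := stepne n (by omega)
      have h2 : ((δ (pvtx m (0,0) n)).2 : Fin 2).val ≠ ((δ (pvtx m (0,0) (n+1))).2 : Fin 2).val := by
        intro hv; exact hne (Fin.ext hv)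
      have ihv := ih (by omega)
      have b0 : ((δ (pvtx m (0,0) 0)).2 : Fin 2).val < 2 := (δ (pvtx m (0,0) 0)).2.isLt
      have b1 : ((δ (pvtx m (0,0) n)).2 : Fin 2).val < 2 := (δ (pvtx m (0,0) n)).2.isLt
      have b2 : ((δ (pvtx m (0,0) (n+1))).2 : Fin 2).val < 2 := (δ (pvtx m (0,0) (n+1))).2.isLt
      by_cases hE : Even n
      · have hE' : ¬ Even (n+1) := by simp [Nat.even_add_one, hE]
        rw [if_pos hE] at ihv
        rw [if_neg hE']
        omega
      · have hE' : Even (n+1) := by simp [Nat.even_add_one, hE]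
        rw [if_neg hE] at ihv
        rw [if_pos hE']
        omega
  have hm0 : pvtx m (0,0) 0 = SubV.orig .B 0 := by simp [pvtx]
  have hmM : pvtx m (0,0) m = SubV.orig .W 0 := by simp [pvtx]; omega
  have := alt m le_rfl
  rw [if_neg hmodd, hm0, hmM] at this
  have hv := congrArg Fin.val hBW
  have b0 : ((δ (SubV.orig .B 0)).2 : Fin 2).val < 2 := (δ (SubV.orig .B 0)).2.isLt
  omega
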